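/- Fix real numbers x_r and x₀, and let β : ℕ → ℝ with 0 ≤ β τ ≤ 1 for all τ. Define the forward kernels K_τ : ℝ → Measure ℝ by K_τ x = gaussianReal (x_r + Real.sqrt (1 - β τ) * (x - x_r)) (⟨β τ, _⟩), and define ᾱ : ℕ → ℝ by ᾱ n = ∏ τ in Finset.range n, (1 - β τ). Then for every n, the n-step forward marginal starting from the Dirac mass at x₀, obtained by successively binding Measure.dirac x₀ with K_0, K_1, …, K_{n−1}, equals gaussianReal (x_r + Real.sqrt (ᾱ n) * (x₀ - x_r)) (⟨1 - ᾱ n, _⟩). -/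

import Mathlib

open MeasureTheory ProbabilityTheory
open scoped NNReal

/-! A forward step pushes the current marginal through the affine map
`x ↦ x_r + √(1 - β) (x - x_r)` and then convolves with `N(0, β)`. Real Gaussians are stable
under both operations, and the variance recursion `(1 - β)(1 - ᾱ) + β = 1 - ᾱ (1 - β)` is that of
`1 - ᾱ`, so the closed form follows by induction on `n`. -/

noncomputable def iterBind {α : Type*} [MeasurableSpace α] (μ : Measure α)
    (K : ℕ → α → Measure α) : ℕ → Measure α
  | 0 => μ
  | n + 1 => (iterBind μ K n).bind (K n)

namespace MeasureTheory.Measure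

variable {α β γ : Type*} [MeasurableSpace α] [MeasurableSpace β] [MeasurableSpace γ]

theorem bind_comp_eq_bind_map {μ : Measure α} {f : α → β} {g : β → Measure γ}
    (hf : Measurable f) (hg : Measurable g) : μ.bind (g ∘ f) = (μ.map f).bind g := by
  rw [bind, bind, map_map hg hf]

theorem bind_map_const_add_eq_conv {G : Type*} [AddMonoid G] [MeasurableSpace G]
    [MeasurableAdd₂ G] (μ ν : Measure G) [SFinite ν] : μ.bind (fun x ↦ ν.map (x + ·)) = μ ∗ ν := by
  have hmeas : Measurable fun x : G ↦ ν.map (x + ·) := by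
    refine measurable_of_measurable_coe _ fun s hs ↦ ?_
    simp_rw [map_apply (measurable_const_add _) hs]
    exact measurable_measure_prodMk_left (measurable_add hs)
  ext s hs
  rw [bind_apply hs hmeas.aemeasurable, ← lintegral_indicator_one hs,
    lintegral_conv (measurable_one.indicator hs)]
  refine lintegral_congr fun x ↦ ?_
  rw [map_apply (measurable_const_add x) hs,
    ← lintegral_indicator_one (measurable_const_add x hs)]
  rfl

end MeasureTheory.Measure

namespace ProbabilityTheory

theorem gaussianReal_bind_gaussianReal (m : ℝ) (v w : ℝ≥0) :
    (gaussianReal m v).bind (fun x ↦ gaussianReal x w) = gaussianReal m (v + w) := by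
  have h : ∀ x, gaussianReal x w = (gaussianReal 0 w).map (x + ·) := fun x ↦ by
    rw [gaussianReal_map_const_add, zero_add]
  rw [funext h, Measure.bind_map_const_add_eq_conv, gaussianReal_conv_gaussianReal, add_zero]

theorem gaussianReal_map_const_add_mul (m a c : ℝ) (v : ℝ≥0) :
    (gaussianReal m v).map (fun x ↦ a + c * x)
      = gaussianReal (a + c * m) (.mk (c ^ 2) (sq_nonneg c) * v) := by
  have h : (fun x : ℝ ↦ a + c * x) = (a + ·) ∘ (c * ·) := rfl
  rw [h, ← Measure.map_map (measurable_const_add a) (measurable_const_mul c),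
    gaussianReal_map_const_mul, gaussianReal_map_const_add, add_comm]

theorem gaussianReal_bind_gaussianReal_affine (m r c : ℝ) (v w : ℝ≥0) :
    (gaussianReal m v).bind (fun x ↦ gaussianReal (r + c * (x - r)) w)
      = gaussianReal (r + c * (m - r)) (.mk (c ^ 2) (sq_nonneg c) * v + w) := by
  have h : (fun x ↦ gaussianReal (r + c * (x - r)) w)
      = (fun y ↦ gaussianReal y w) ∘ (fun x ↦ (r - c * r) + c * x) :=
    funext fun x ↦ congrArg (gaussianReal · w) (by ring)
  rw [h, Measure.bind_comp_eq_bind_map (by fun_prop) (by fun_prop),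
    gaussianReal_map_const_add_mul, gaussianReal_bind_gaussianReal]
  congr 1
  ring

end ProbabilityTheory

theorem stmt15 (x_r x₀ : ℝ) (β : ℕ → ℝ) (hβ : ∀ τ, 0 ≤ β τ ∧ β τ ≤ 1)
    (K : ℕ → ℝ → Measure ℝ)
    (hK : ∀ τ x, K τ x
      = gaussianReal (x_r + Real.sqrt (1 - β τ) * (x - x_r)) ⟨β τ, (hβ τ).1⟩) :
    ∀ n, iterBind (Measure.dirac x₀) K n
      = gaussianReal
          (x_r + Real.sqrt (∏ τ ∈ Finset.range n, (1 - β τ)) * (x₀ - x_r))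
          (1 - ∏ τ ∈ Finset.range n, (1 - β τ)).toNNReal := by
  intro n
  induction n with
  | zero => simp [iterBind]
  | succ n ih =>
    have hβn : 0 ≤ 1 - β n := sub_nonneg.2 (hβ n).2
    have hᾱ : ∏ τ ∈ Finset.range n, (1 - β τ) ≤ 1 :=
      Finset.prod_le_one (fun τ _ ↦ sub_nonneg.2 (hβ τ).2) fun τ _ ↦ by linarith [(hβ τ).1]
    -- In `hK` the variance is elaborated in `{r // 0 ≤ r}`, which `rw` does not match with `ℝ≥0`.
    have hKn : K n = fun x ↦
        gaussianReal (x_r + Real.sqrt (1 - β n) * (x - x_r)) (β n).toNNReal :=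
      funext fun x ↦ (hK n x).trans (congrArg _ (Real.toNNReal_of_nonneg (hβ n).1).symm)
    rw [iterBind, ih, hKn, gaussianReal_bind_gaussianReal_affine, Finset.prod_range_succ,
      Real.sqrt_mul' _ hβn]
    congr 1
    · ring
    · ext
      push_cast
      rw [Real.sq_sqrt hβn, Real.coe_toNNReal _ (sub_nonneg.2 hᾱ), Real.coe_toNNReal _ (hβ n).1,
        Real.coe_toNNReal _ (by nlinarith [(hβ n).1])]
      ring
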